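/- arXiv:0707.2491 — 3 statements merged into one kernel-verified Lean document; each statement's English description precedes it below -/
import Mathlib

section
/- Let γ ∈ ℝ, 1 < p, and ω > γ²/4. Define φ(x) = [ ((p+1)ω/2) · sech²( ((p-1)√ω/2)|x| + arctanh(γ/(2√ω)) ) ]^{1/(p-1)}. Then for every x ≠ 0, φ is smooth at x and satisfies −φ''(x) + ω φ(x) − φ(x)^p = 0. -/
open Real MeasureTheory
open scoped Topology

noncomputable def artanh (z : ℝ) : ℝ := Real.log ((1 + z) / (1 - z)) / 2

noncomputable def phi (γ p ω : ℝ) : ℝ → ℝ := fun x =>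
  (((p + 1) * ω / 2) *
      (1 / Real.cosh ((p - 1) * Real.sqrt ω / 2 * |x| +
        _root_.artanh (γ / (2 * Real.sqrt ω)))) ^ 2) ^ (1 / (p - 1))

private lemma deriv2_eq' {f f1 f2 : ℝ → ℝ} (h1 : ∀ y, HasDerivAt f (f1 y) y)
    (h2 : ∀ y, HasDerivAt f1 (f2 y) y) (x : ℝ) :
    deriv (deriv f) x = f2 x := by
  have hd : deriv f = f1 := funext fun y => (h1 y).deriv
  rw [hd, (h2 x).deriv]

private lemma g_props (p ω c : ℝ) (hp : 1 < p) (hω0 : 0 < ω) :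
    ∃ g g1 g2 : ℝ → ℝ,
      (∀ y : ℝ, (((p + 1) * ω / 2) *
          (1 / Real.cosh ((p - 1) * Real.sqrt ω / 2 * y + c)) ^ 2) ^ (1 / (p - 1)) = g y) ∧
      (∀ y, HasDerivAt g (g1 y) y) ∧ (∀ y, HasDerivAt g1 (g2 y) y) ∧
      (∀ y, ContDiffAt ℝ (⊤ : ℕ∞) g y) ∧
      (∀ y, -(g2 y) + ω * g y - g y ^ p = 0) := by
  have hp1 : (0:ℝ) < p - 1 := by linarith
  set s : ℝ := Real.sqrt ω with hs_def
  have hs : 0 < s := Real.sqrt_pos.mpr hω0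
  have hs2 : s ^ 2 = ω := Real.sq_sqrt hω0.le
  set b : ℝ := (p - 1) * s / 2 with hb_def
  set a : ℝ := (p + 1) * ω / 2 with ha_def
  have ha : 0 < a := by positivity
  set e : ℝ := -2 / (p - 1) with he_def
  set A : ℝ := a ^ (1 / (p - 1)) with hA_def
  have hA : 0 < A := Real.rpow_pos_of_pos ha _
  refine ⟨fun y => A * Real.cosh (b * y + c) ^ e,
    fun y => (A * e * b) * (Real.cosh (b * y + c) ^ (e - 1) * Real.sinh (b * y + c)),
    fun y => (A * e * b * b) * ((e - 1) * Real.cosh (b * y + c) ^ (e - 2) *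
        Real.sinh (b * y + c) ^ 2 + Real.cosh (b * y + c) ^ (e - 1) * Real.cosh (b * y + c)),
    ?_, ?_, ?_, ?_, ?_⟩
  · intro y
    have hC : 0 < Real.cosh (b * y + c) := Real.cosh_pos _
    set C := Real.cosh (b * y + c)
    have h1 : (1 / C) ^ 2 = C ^ (-2 : ℝ) := by
      rw [Real.rpow_neg hC.le, Real.rpow_two, one_div, inv_pow]
    rw [h1, Real.mul_rpow ha.le (Real.rpow_nonneg hC.le _), ← Real.rpow_mul hC.le,
      show (-2 : ℝ) * (1 / (p - 1)) = e by rw [he_def]; ring]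
  · intro y
    have hC : 0 < Real.cosh (b * y + c) := Real.cosh_pos _
    have hu : HasDerivAt (fun y : ℝ => b * y + c) b y := by
      simpa using ((hasDerivAt_id y).const_mul b).add_const c
    have hcosh : HasDerivAt (fun y : ℝ => Real.cosh (b * y + c))
        (Real.sinh (b * y + c) * b) y := (Real.hasDerivAt_cosh _).comp y hu
    have hr : HasDerivAt (fun t : ℝ => t ^ e)
        (e * Real.cosh (b * y + c) ^ (e - 1)) (Real.cosh (b * y + c)) :=
      Real.hasDerivAt_rpow_const (Or.inl hC.ne')
    have h := (hr.comp y hcosh).const_mul A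
    exact h.congr_deriv (by ring)
  · intro y
    have hC : 0 < Real.cosh (b * y + c) := Real.cosh_pos _
    have hu : HasDerivAt (fun y : ℝ => b * y + c) b y := by
      simpa using ((hasDerivAt_id y).const_mul b).add_const c
    have hcosh : HasDerivAt (fun y : ℝ => Real.cosh (b * y + c))
        (Real.sinh (b * y + c) * b) y := (Real.hasDerivAt_cosh _).comp y hu
    have hsinh : HasDerivAt (fun y : ℝ => Real.sinh (b * y + c))
        (Real.cosh (b * y + c) * b) y := (Real.hasDerivAt_sinh _).comp y hu
    have hpow : HasDerivAt (fun y : ℝ => Real.cosh (b * y + c) ^ (e - 1))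
        ((e - 1) * Real.cosh (b * y + c) ^ (e - 1 - 1) * (Real.sinh (b * y + c) * b)) y := by
      have hr : HasDerivAt (fun t : ℝ => t ^ (e - 1))
          ((e - 1) * Real.cosh (b * y + c) ^ (e - 1 - 1)) (Real.cosh (b * y + c)) :=
        Real.hasDerivAt_rpow_const (Or.inl hC.ne')
      exact hr.comp y hcosh
    rw [show e - 1 - 1 = e - 2 by ring] at hpow
    have h := (hpow.mul hsinh).const_mul (A * e * b)
    exact h.congr_deriv (by ring)
  · intro y
    have hC : 0 < Real.cosh (b * y + c) := Real.cosh_pos _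
    have hlin : ContDiff ℝ (⊤ : ℕ∞) (fun y : ℝ => b * y + c) :=
      (contDiff_const.mul contDiff_id).add contDiff_const
    have hcosh : ContDiff ℝ (⊤ : ℕ∞) (fun y : ℝ => Real.cosh (b * y + c)) :=
      Real.contDiff_cosh.comp hlin
    exact contDiffAt_const.mul
      (by have h := (Real.contDiffAt_rpow_const_of_ne (n := (⊤ : ℕ∞)) (p := e) hC.ne').comp y hcosh.contDiffAt; exact h)
  · intro y
    have hC : 0 < Real.cosh (b * y + c) := Real.cosh_pos _
    set C := Real.cosh (b * y + c) with hC_def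
    set S := Real.sinh (b * y + c) with hS_def
    have hS2 : S ^ 2 = C ^ 2 - 1 := Real.sinh_sq _
    have hP1 : C ^ (e - 1) = C ^ (e - 2) * C := by
      rw [show e - 1 = (e - 2) + 1 by ring, Real.rpow_add hC, Real.rpow_one]
    have hPe : C ^ e = C ^ (e - 2) * C ^ 2 := by
      rw [← Real.rpow_two C, ← Real.rpow_add hC]; norm_num
    have hgp : (A * C ^ e) ^ p = a * A * C ^ (e - 2) := by
      rw [Real.mul_rpow hA.le (Real.rpow_nonneg hC.le _), ← Real.rpow_mul hC.le,
        show e * p = e - 2 by rw [he_def]; field_simp; ring,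
        hA_def, ← Real.rpow_mul ha.le,
        show 1 / (p - 1) * p = 1 + 1 / (p - 1) by field_simp; ring,
        Real.rpow_add ha, Real.rpow_one]
    have h1 : e ^ 2 * b ^ 2 = ω := by
      rw [he_def, hb_def, ← hs2]; field_simp
    have h2 : e * (e - 1) * b ^ 2 = a := by
      rw [he_def, hb_def, ha_def, ← hs2]; field_simp; ring
    beta_reduce
    rw [hgp, hP1, hPe, hS2]
    linear_combination (-(A * C ^ (e - 2) * C ^ 2)) * h1 + (A * C ^ (e - 2)) * h2

theorem stmt0 (γ p ω : ℝ) (hp : 1 < p) (hω : γ ^ 2 / 4 < ω) :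
    ∀ x : ℝ, x ≠ 0 → ContDiffAt ℝ (⊤ : ℕ∞) (phi γ p ω) x ∧
      -(deriv (deriv (phi γ p ω)) x) + ω * phi γ p ω x - phi γ p ω x ^ p = 0 := by
  intro x hx
  have hω0 : 0 < ω := lt_of_le_of_lt (by positivity) hω
  obtain ⟨g, g1, g2, hgeq, hg1, hg2, hsm, hode⟩ :=
    g_props p ω (_root_.artanh (γ / (2 * Real.sqrt ω))) hp hω0
  rcases hx.lt_or_gt with hneg | hpos
  · -- x < 0 : phi agrees with y ↦ g (-y) near x
    have hev : phi γ p ω =ᶠ[𝓝 x] fun y => g (-y) := by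
      filter_upwards [eventually_lt_nhds hneg] with y hy
      show phi γ p ω y = g (-y)
      simp only [phi, abs_of_neg hy]
      exact hgeq (-y)
    have hn1 : ∀ y, HasDerivAt (fun y => g (-y)) (-(g1 (-y))) y := fun y => by
      have := (hg1 (-y)).comp y (hasDerivAt_neg y)
      exact this.congr_deriv (by ring)
    have hn2 : ∀ y, HasDerivAt (fun y => -(g1 (-y))) (g2 (-y)) y := fun y => by
      have := ((hg2 (-y)).comp y (hasDerivAt_neg y)).neg
      exact this.congr_deriv (by ring)
    refine ⟨((hsm (-x)).comp x contDiff_neg.contDiffAt).congr_of_eventuallyEq hev, ?_⟩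
    have hd : deriv (deriv (phi γ p ω)) x = g2 (-x) := by
      rw [hev.deriv.deriv_eq]
      exact deriv2_eq' hn1 hn2 x
    rw [hd, hev.eq_of_nhds]
    exact hode (-x)
  · -- 0 < x
    have hev : phi γ p ω =ᶠ[𝓝 x] g := by
      filter_upwards [eventually_gt_nhds hpos] with y hy
      show phi γ p ω y = g y
      simp only [phi, abs_of_pos hy]
      exact hgeq y
    refine ⟨(hsm x).congr_of_eventuallyEq hev, ?_⟩
    have hd : deriv (deriv (phi γ p ω)) x = g2 x := by
      rw [hev.deriv.deriv_eq]
      exact deriv2_eq' hg1 hg2 x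
    rw [hd, hev.eq_of_nhds]
    exact hode x
end

section
/- Let γ ∈ ℝ, 1 < p, and ω > γ²/4, and let φ be the explicit profile φ(x) = [ ((p+1)ω/2) · sech²( ((p-1)√ω/2)|x| + arctanh(γ/(2√ω)) ) ]^{1/(p-1)}. Then the right and left derivatives of φ at 0 satisfy the jump condition φ'(0⁺) − φ'(0⁻) = −γ φ(0). -/
open Real MeasureTheory Filter

lemma sinh_div_cosh_artanh {z : ℝ} (h : |z| < 1) :
    Real.sinh (_root_.artanh z) / Real.cosh (_root_.artanh z) = z := by
  have h1 : z < 1 := (abs_lt.1 h).2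
  have h2 : -1 < z := (abs_lt.1 h).1
  have hw : 0 < (1 + z) / (1 - z) := by
    apply div_pos <;> linarith
  set t := _root_.artanh z with ht
  have hE2 : Real.exp t ^ 2 = (1 + z) / (1 - z) := by
    rw [← Real.exp_nat_mul, ht, _root_.artanh]
    rw [show (2 : ℕ) * (Real.log ((1 + z) / (1 - z)) / 2)
        = Real.log ((1 + z) / (1 - z)) by push_cast; ring, Real.exp_log hw]
  have h1z : (1 : ℝ) - z ≠ 0 := by linarith
  have hE2' : Real.exp t ^ 2 * (1 - z) = 1 + z := by
    rw [hE2]; field_simp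
  rw [Real.sinh_eq, Real.cosh_eq, Real.exp_neg]
  have hE0 : Real.exp t ≠ 0 := (Real.exp_pos t).ne'
  have hden : Real.exp t + (Real.exp t)⁻¹ ≠ 0 := by positivity
  field_simp
  nlinarith [hE2']

theorem stmt1 (γ p ω : ℝ) (hp : 1 < p) (hω : γ ^ 2 / 4 < ω) :
    ∃ a b : ℝ,
      Tendsto (deriv (phi γ p ω)) (nhdsWithin 0 (Set.Ioi 0)) (nhds a) ∧
      Tendsto (deriv (phi γ p ω)) (nhdsWithin 0 (Set.Iio 0)) (nhds b) ∧
      a - b = -γ * phi γ p ω 0 := by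
  have hp1 : p - 1 ≠ 0 := sub_ne_zero.2 (ne_of_gt hp)
  have hp1' : 0 < p - 1 := sub_pos.2 hp
  have hω0 : 0 < ω := lt_of_le_of_lt (by positivity) hω
  set s := Real.sqrt ω with hs
  have hs0 : 0 < s := Real.sqrt_pos.2 hω0
  have hs2 : s ^ 2 = ω := Real.sq_sqrt hω0.le
  set c := (p - 1) * s / 2 with hc
  set a0 := _root_.artanh (γ / (2 * s)) with ha0
  set K := (p + 1) * ω / 2 with hK
  have hK0 : 0 < K := by rw [hK]; nlinarith
  set m := 1 / (p - 1) with hm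
  set F : ℝ → ℝ := fun x => (K * (1 / Real.cosh (c * x + a0)) ^ 2) ^ m with hFdef
  have hXpos : ∀ x : ℝ, 0 < K * (1 / Real.cosh (c * x + a0)) ^ 2 := by
    intro x
    have := Real.cosh_pos (c * x + a0)
    positivity
  have hFpos : ∀ x, 0 < F x := fun x => Real.rpow_pos_of_pos (hXpos x) m
  set g : ℝ → ℝ := fun x =>
    -2 * m * c * (Real.sinh (c * x + a0) / Real.cosh (c * x + a0)) * F x with hgdef
  have hder : ∀ x : ℝ, HasDerivAt F (g x) x := by
    intro x
    have h1 : HasDerivAt (fun x : ℝ => c * x + a0) c x := by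
      simpa using ((hasDerivAt_id x).const_mul c).add_const a0
    have h2 : HasDerivAt (fun x : ℝ => Real.cosh (c * x + a0))
        (Real.sinh (c * x + a0) * c) x := (Real.hasDerivAt_cosh _).comp x h1
    have h3 := ((h2.inv (Real.cosh_pos _).ne').pow 2).const_mul K
    have h5 := h3.rpow_const (p := m) (Or.inl (by
      show K * ((Real.cosh (c * x + a0))⁻¹) ^ 2 ≠ 0
      have := Real.cosh_pos (c * x + a0); positivity))
    have hFeq : F = fun x => (K * ((Real.cosh (c * x + a0))⁻¹) ^ 2) ^ m := by
      funext y; rw [hFdef]; simp [one_div]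
    rw [hgdef, hFeq]
    convert h5 using 1
    · rfl
    simp only [Pi.inv_apply, Pi.pow_apply]
    set u := c * x + a0 with hu
    have hcosh : Real.cosh u ≠ 0 := (Real.cosh_pos u).ne'
    have hX : (0:ℝ) < K * ((Real.cosh u)⁻¹) ^ 2 := by
      have := Real.cosh_pos u; positivity
    have hXm : (K * ((Real.cosh u)⁻¹) ^ 2) ^ (m - 1)
        = (K * ((Real.cosh u)⁻¹) ^ 2) ^ m / (K * ((Real.cosh u)⁻¹) ^ 2) := by
      rw [Real.rpow_sub hX, Real.rpow_one]
    rw [hXm]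
    field_simp
    ring_nf
    simp only [mul_inv_cancel_right₀ hcosh]
  have hdiff : Differentiable ℝ F := fun x => (hder x).differentiableAt
  have hg : Continuous g := by
    rw [hgdef]
    apply Continuous.mul
    · apply Continuous.mul continuous_const
      apply Continuous.div
      · exact Real.continuous_sinh.comp (by continuity)
      · exact Real.continuous_cosh.comp (by continuity)
      · intro x; exact (Real.cosh_pos _).ne'
    · exact hdiff.continuous
  -- right limit
  have hright : Tendsto (deriv (phi γ p ω)) (nhdsWithin 0 (Set.Ioi 0)) (nhds (g 0)) := by
    have h1 : Tendsto g (nhdsWithin 0 (Set.Ioi 0)) (nhds (g 0)) :=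
      hg.continuousAt.continuousWithinAt
    refine h1.congr' ?_
    filter_upwards [self_mem_nhdsWithin] with x hx
    have hev : phi γ p ω =ᶠ[nhds x] F := by
      filter_upwards [isOpen_Ioi.mem_nhds hx] with y hy
      simp only [phi, hFdef]
      rw [abs_of_pos hy]
    rw [← (hder x).deriv, hev.deriv_eq]
  -- left limit
  have hGder : ∀ x : ℝ, HasDerivAt (fun y => F (-y)) (-(g (-x))) x := by
    intro x
    have h := (hder (-x)).comp x (hasDerivAt_neg x)
    have h2 : HasDerivAt (fun y : ℝ => F (-y)) (g (-x) * (-1)) x := h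
    simpa [mul_neg_one] using h2
  have hleft : Tendsto (deriv (phi γ p ω)) (nhdsWithin 0 (Set.Iio 0)) (nhds (-(g 0))) := by
    have h1 : Tendsto (fun x => -(g (-x))) (nhdsWithin 0 (Set.Iio 0)) (nhds (-(g (-0)))) :=
      ((hg.comp continuous_neg).neg.continuousAt.continuousWithinAt)
    rw [neg_zero] at h1
    refine h1.congr' ?_
    filter_upwards [self_mem_nhdsWithin] with x hx
    have hev : phi γ p ω =ᶠ[nhds x] (fun y => F (-y)) := by
      filter_upwards [isOpen_Iio.mem_nhds hx] with y hy
      simp only [phi, hFdef]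
      rw [abs_of_neg hy]
    rw [← (hGder x).deriv, hev.deriv_eq]
  refine ⟨g 0, -(g 0), hright, hleft, ?_⟩
  -- arithmetic
  have hphi0 : phi γ p ω 0 = F 0 := by
    simp only [phi, hFdef, abs_zero, mul_zero]
    rfl
  have htanh : Real.sinh a0 / Real.cosh a0 = γ / (2 * s) := by
    rw [ha0]
    apply sinh_div_cosh_artanh
    rw [abs_lt]
    constructor
    · rw [neg_lt, ← neg_div]
      rw [div_lt_one (by positivity)]
      nlinarith [sq_nonneg (γ + 2 * s)]
    · rw [div_lt_one (by positivity)]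
      nlinarith [sq_nonneg (γ - 2 * s)]
  have hg0 : g 0 = -(γ / 2) * F 0 := by
    rw [hgdef]
    simp only [mul_zero, zero_add, htanh, hm, hc]
    field_simp
  rw [hg0, hphi0]
  ring
end

section
/- Let γ ∈ ℝ, ω > γ²/4, 1 < p, and let φ be the explicit delta-NLS profile. Then Q_γ(φ) = 0, i.e., ‖∂_x φ‖²_{L²} − (γ/2)|φ(0)|² − ((p−1)/(2(p+1)))‖φ‖^{p+1}_{L^{p+1}} = 0. -/
open Real MeasureTheory

noncomputable def gradSq (v : ℝ → ℝ) : ℝ := ∫ x : ℝ, (deriv v x) ^ 2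
noncomputable def l2Sq (v : ℝ → ℝ) : ℝ := ∫ x : ℝ, (v x) ^ 2
noncomputable def lpp (p : ℝ) (v : ℝ → ℝ) : ℝ := ∫ x : ℝ, |v x| ^ (p + 1)
noncomputable def Ifun (ω γ p : ℝ) (v : ℝ → ℝ) : ℝ :=
  gradSq v + ω * l2Sq v - γ * (v 0) ^ 2 - lpp p v
noncomputable def Sfun (ω γ p : ℝ) (v : ℝ → ℝ) : ℝ :=
  gradSq v / 2 + ω / 2 * l2Sq v - γ / 2 * (v 0) ^ 2 - lpp p v / (p + 1)
noncomputable def Qfun (γ p : ℝ) (v : ℝ → ℝ) : ℝ :=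
  gradSq v - γ / 2 * (v 0) ^ 2 - (p - 1) / (2 * (p + 1)) * lpp p v
noncomputable def sc (α : ℝ) (v : ℝ → ℝ) : ℝ → ℝ := fun x => Real.sqrt α * v (α * x)
noncomputable def dil (β : ℝ) (v : ℝ → ℝ) : ℝ → ℝ := fun x => v (β * x)
def InH1 (p : ℝ) (v : ℝ → ℝ) : Prop :=
  Continuous v ∧ MeasureTheory.Integrable (fun x : ℝ => (v x) ^ 2) ∧
    MeasureTheory.Integrable (fun x : ℝ => (deriv v x) ^ 2) ∧
    MeasureTheory.Integrable (fun x : ℝ => |v x| ^ (p + 1))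

open Set Filter Topology

lemma tanh_artanh (z : ℝ) (hz : |z| < 1) : Real.tanh (_root_.artanh z) = z := by
  rw [_root_.artanh]
  have h1 : 0 < 1 - z := by cases' abs_lt.1 hz with h h; linarith
  have h2 : 0 < 1 + z := by cases' abs_lt.1 hz with h h; linarith
  have hr : 0 < (1 + z) / (1 - z) := div_pos h2 h1
  set r := (1 + z) / (1 - z) with hrdef
  set s := r ^ ((1:ℝ)/2) with hsdef
  have hs : 0 < s := Real.rpow_pos_of_pos hr _
  have hs2 : s ^ 2 = r := by
    rw [hsdef, ← Real.rpow_natCast (r ^ ((1:ℝ)/2)) 2, ← Real.rpow_mul hr.le]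
    norm_num
  have hea : Real.exp (Real.log r / 2) = s := by
    rw [hsdef, Real.rpow_def_of_pos hr]
    ring_nf
  have hena : Real.exp (-(Real.log r / 2)) = s⁻¹ := by
    rw [Real.exp_neg, hea]
  rw [Real.tanh_eq_sinh_div_cosh, Real.sinh_eq, Real.cosh_eq, hea, hena]
  have hr1 : r - 1 = z * (r + 1) := by
    rw [hrdef]; field_simp; ring
  have hcosh : (s + s⁻¹) / 2 ≠ 0 := by positivity
  field_simp
  nlinarith [hs, hs2]
-- derivative of the profile on a half line
lemma psi_hasDerivAt (b a c D y : ℝ) :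
    HasDerivAt (fun y => D * Real.cosh (b*y+a) ^ (-c : ℝ))
      (D * (Real.sinh (b*y+a) * b * (-c) * Real.cosh (b*y+a) ^ (-c-1 : ℝ))) y := by
  have hu : HasDerivAt (fun y : ℝ => b*y+a) b y := by
    simpa using ((hasDerivAt_id y).const_mul b).add_const a
  have hcosh : HasDerivAt (fun y : ℝ => Real.cosh (b*y+a)) (Real.sinh (b*y+a) * b) y :=
    hu.cosh
  exact (hcosh.rpow_const (Or.inl (Real.cosh_pos _).ne')).const_mul D

lemma G_hasDerivAt (b a c D y : ℝ) :
    HasDerivAt (fun y => -(D^2*b*c/2) * (Real.sinh (b*y+a) * Real.cosh (b*y+a) ^ (-(2*c)-1 : ℝ)))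
      ((D * (Real.sinh (b*y+a) * b * (-c) * Real.cosh (b*y+a) ^ (-c-1 : ℝ)))^2
        - D^2*b^2*c/2 * Real.cosh (b*y+a) ^ (-(2*c)-2 : ℝ)) y := by
  have hu : HasDerivAt (fun y : ℝ => b*y+a) b y := by
    simpa using ((hasDerivAt_id y).const_mul b).add_const a
  have hcosh : HasDerivAt (fun y : ℝ => Real.cosh (b*y+a)) (Real.sinh (b*y+a) * b) y :=
    hu.cosh
  have hsinh : HasDerivAt (fun y : ℝ => Real.sinh (b*y+a)) (Real.cosh (b*y+a) * b) y :=
    hu.sinh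
  have hrpow : HasDerivAt (fun y : ℝ => Real.cosh (b*y+a) ^ (-(2*c)-1 : ℝ))
      ((Real.sinh (b*y+a) * b) * (-(2*c)-1) * Real.cosh (b*y+a) ^ ((-(2*c)-1)-1 : ℝ)) y :=
    hcosh.rpow_const (Or.inl (Real.cosh_pos _).ne')
  have h := (hsinh.mul hrpow).const_mul (-(D^2*b*c/2))
  refine h.congr_deriv ?_
  symm
  set u := b*y+a
  have hch := Real.cosh_pos u
  have e1 : (Real.cosh u ^ (-c-1 : ℝ))^2 = Real.cosh u ^ (-(2*c)-2 : ℝ) := by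
    rw [← Real.rpow_natCast (Real.cosh u ^ (-c-1:ℝ)) 2, ← Real.rpow_mul hch.le]
    norm_num
    ring_nf
  have e2 : Real.cosh u ^ ((-(2*c)-1)-1 : ℝ) = Real.cosh u ^ (-(2*c)-2 : ℝ) := by
    ring_nf
  have e3 : Real.cosh u ^ (-(2*c)-1 : ℝ) = Real.cosh u * Real.cosh u ^ (-(2*c)-2 : ℝ) := by
    rw [show (-(2*c)-1 : ℝ) = 1 + (-(2*c)-2) by ring, Real.rpow_add hch, Real.rpow_one]
  rw [e2, e3]
  have hsq : Real.cosh u ^ 2 = Real.sinh u ^ 2 + 1 := Real.cosh_sq u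
  set X := Real.cosh u ^ (-(2*c)-2 : ℝ) with hX
  have expand : (D * (Real.sinh u * b * (-c) * Real.cosh u ^ (-c-1:ℝ)))^2
      = D^2 * Real.sinh u ^2 * b^2 * c^2 * (Real.cosh u ^ (-c-1:ℝ))^2 := by ring
  rw [expand, e1]
  linear_combination (D^2*b^2*c/2*X) * hsq

lemma cosh_rpow_bound (u m : ℝ) (hm : 0 ≤ m) :
    Real.cosh u ^ (-m : ℝ) ≤ 2 ^ m * Real.exp (-(m * u)) := by
  have h1 : Real.exp u / 2 ≤ Real.cosh u := by
    rw [Real.cosh_eq]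
    have : 0 < Real.exp (-u) := Real.exp_pos _
    linarith
  have h2 : (0:ℝ) < Real.exp u / 2 := by positivity
  calc Real.cosh u ^ (-m : ℝ) ≤ (Real.exp u / 2) ^ (-m : ℝ) :=
        Real.rpow_le_rpow_of_nonpos h2 h1 (by linarith)
    _ = 2 ^ m * Real.exp (-(m * u)) := by
        rw [Real.div_rpow (Real.exp_pos u).le (by norm_num),
          ← Real.exp_mul, Real.rpow_neg (by norm_num : (0:ℝ) ≤ 2)]
        rw [div_inv_eq_mul, mul_comm (rexp (u * -m))]
        ring_nf

lemma integrableOn_cosh_rpow (b a m : ℝ) (hb : 0 < b) (hm : 0 < m) :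
    IntegrableOn (fun x => Real.cosh (b * x + a) ^ (-m : ℝ)) (Ioi (0:ℝ)) := by
  have hint : IntegrableOn (fun x : ℝ => 2 ^ m * Real.exp (-(m*a)) * Real.exp (-(m * b) * x)) (Ioi (0:ℝ)) :=
    (exp_neg_integrableOn_Ioi 0 (by positivity)).const_mul _
  refine Integrable.mono' hint ?_ ?_
  · exact ((Real.continuous_cosh.comp (by continuity)).rpow_const
      (fun x => Or.inl (Real.cosh_pos _).ne')).aestronglyMeasurable.restrict
  · filter_upwards with x
    rw [Real.norm_eq_abs, abs_of_nonneg (Real.rpow_nonneg (Real.cosh_pos _).le _)]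
    calc Real.cosh (b*x+a) ^ (-m:ℝ) ≤ 2 ^ m * Real.exp (-(m * (b*x+a))) :=
          cosh_rpow_bound _ _ hm.le
      _ = 2 ^ m * Real.exp (-(m*a)) * Real.exp (-(m*b)*x) := by
          rw [mul_assoc, ← Real.exp_add]; ring_nf

lemma abs_sinh_le_cosh (x : ℝ) : |Real.sinh x| ≤ Real.cosh x := by
  rw [Real.abs_sinh, ← Real.cosh_abs]
  exact (Real.sinh_lt_cosh _).le

lemma integrableOn_W (b a c D : ℝ) (hb : 0 < b) (hc : 0 < c) :
    IntegrableOn (fun y => (D * (Real.sinh (b*y+a) * b * (-c) * Real.cosh (b*y+a) ^ (-c-1 : ℝ)))^2)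
      (Ioi (0:ℝ)) := by
  have hint := (integrableOn_cosh_rpow b a (2*c) hb (by positivity)).const_mul (D^2*b^2*c^2)
  refine Integrable.mono' hint ?_ ?_
  · have h1 : Continuous fun y : ℝ => b*y+a := by continuity
    have h2 : Continuous fun y : ℝ => Real.cosh (b*y+a) ^ (-c-1:ℝ) :=
      (Real.continuous_cosh.comp h1).rpow_const (fun x => Or.inl (Real.cosh_pos _).ne')
    have h3 : Continuous fun y : ℝ =>
        (D * (Real.sinh (b*y+a) * b * (-c) * Real.cosh (b*y+a) ^ (-c-1:ℝ)))^2 :=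
      (continuous_const.mul ((((Real.continuous_sinh.comp h1).mul continuous_const).mul
        continuous_const).mul h2)).pow 2
    exact h3.aestronglyMeasurable.restrict
  · filter_upwards with y
    set u := b*y+a
    have hch := Real.cosh_pos u
    rw [Real.norm_eq_abs, abs_of_nonneg (sq_nonneg _)]
    have e1 : (Real.cosh u ^ (-c-1 : ℝ))^2 = Real.cosh u ^ (-(2*c)-2 : ℝ) := by
      rw [← Real.rpow_natCast (Real.cosh u ^ (-c-1:ℝ)) 2, ← Real.rpow_mul hch.le]
      norm_num
      ring_nf
    have expand : (D * (Real.sinh u * b * (-c) * Real.cosh u ^ (-c-1:ℝ)))^2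
        = D^2 * b^2 * c^2 * (Real.sinh u ^2 * (Real.cosh u ^ (-c-1:ℝ))^2) := by ring
    rw [expand, e1]
    have hs : Real.sinh u ^ 2 * Real.cosh u ^ (-(2*c)-2 : ℝ) ≤ Real.cosh u ^ (-(2*c) : ℝ) := by
      have e3 : Real.cosh u ^ (-(2*c) : ℝ)
          = Real.cosh u ^2 * Real.cosh u ^ (-(2*c)-2 : ℝ) := by
        rw [← Real.rpow_natCast (Real.cosh u) 2, ← Real.rpow_add hch]
        norm_num
      rw [e3]
      have := abs_sinh_le_cosh u
      have h2 : Real.sinh u ^2 ≤ Real.cosh u ^2 := by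
        nlinarith [abs_nonneg (Real.sinh u), sq_abs (Real.sinh u)]
      exact mul_le_mul_of_nonneg_right h2 (Real.rpow_nonneg hch.le _)
    calc D^2*b^2*c^2 * (Real.sinh u ^2 * Real.cosh u ^ (-(2*c)-2:ℝ))
        ≤ D^2*b^2*c^2 * Real.cosh u ^ (-(2*c):ℝ) :=
          mul_le_mul_of_nonneg_left hs (by positivity)
      _ = D^2*b^2*c^2 * Real.cosh (b*y+a) ^ (-(2*c):ℝ) := rfl

lemma tendsto_G (b a c D : ℝ) (hb : 0 < b) (hc : 0 < c) :
    Tendsto (fun y => -(D^2*b*c/2) * (Real.sinh (b*y+a) * Real.cosh (b*y+a) ^ (-(2*c)-1 : ℝ)))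
      atTop (𝓝 0) := by
  have hg : Tendsto (fun y : ℝ => (D^2*b*c/2) * (2^(2*c) * Real.exp (-(2*c*a))) *
      Real.exp (-(2*c*b*y))) atTop (𝓝 0) := by
    have h1 : Tendsto (fun y : ℝ => 2*c*b*y) atTop atTop :=
      Tendsto.const_mul_atTop (by positivity) tendsto_id
    have := Real.tendsto_exp_neg_atTop_nhds_zero.comp h1
    simpa using this.const_mul ((D^2*b*c/2) * (2^(2*c) * Real.exp (-(2*c*a))))
  refine squeeze_zero_norm (fun y => ?_) hg
  set u := b*y+a with hu
  have hch := Real.cosh_pos u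
  rw [Real.norm_eq_abs, abs_mul, abs_mul,
    abs_of_nonneg (Real.rpow_nonneg hch.le _)]
  have h1 : |Real.sinh u| * Real.cosh u ^ (-(2*c)-1 : ℝ) ≤ Real.cosh u ^ (-(2*c) : ℝ) := by
    have e3 : Real.cosh u ^ (-(2*c) : ℝ) = Real.cosh u * Real.cosh u ^ (-(2*c)-1 : ℝ) := by
      calc Real.cosh u ^ (-(2*c):ℝ) = Real.cosh u ^ ((1:ℝ) + (-(2*c)-1)) := by norm_num
        _ = Real.cosh u ^ (1:ℝ) * Real.cosh u ^ (-(2*c)-1:ℝ) := Real.rpow_add hch _ _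
        _ = Real.cosh u * Real.cosh u ^ (-(2*c)-1:ℝ) := by rw [Real.rpow_one]
    rw [e3]
    exact mul_le_mul_of_nonneg_right (abs_sinh_le_cosh u) (Real.rpow_nonneg hch.le _)
  have h2 : Real.cosh u ^ (-(2*c) : ℝ) ≤ 2^(2*c) * Real.exp (-(2*c*u)) :=
    cosh_rpow_bound u (2*c) (by positivity)
  have habs : |(-(D^2*b*c/2))| = D^2*b*c/2 := by
    rw [abs_neg, abs_of_nonneg (by positivity)]
  rw [habs]
  calc D^2*b*c/2 * (|Real.sinh u| * Real.cosh u ^ (-(2*c)-1:ℝ))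
      ≤ D^2*b*c/2 * (2^(2*c) * Real.exp (-(2*c*u))) := by
        refine mul_le_mul_of_nonneg_left (h1.trans h2) (by positivity)
    _ = D^2*b*c/2 * (2^(2*c) * Real.exp (-(2*c*a))) * Real.exp (-(2*c*b*y)) := by
        rw [show (-(2*c*u) : ℝ) = (-(2*c*a)) + (-(2*c*b*y)) from by rw [hu]; ring,
          Real.exp_add]
        ring

lemma half_line (b a c D : ℝ) (hb : 0 < b) (hc : 0 < c) (hD : 0 < D) :
    ∫ y in Ioi (0:ℝ), ((D * (Real.sinh (b*y+a) * b * (-c) * Real.cosh (b*y+a) ^ (-c-1 : ℝ)))^2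
      - D^2*b^2*c/2 * Real.cosh (b*y+a) ^ (-(2*c)-2 : ℝ))
    = D^2*b*c/2 * (Real.sinh a * Real.cosh a ^ (-(2*c)-1 : ℝ)) := by
  have hInt : IntegrableOn (fun y =>
      (D * (Real.sinh (b*y+a) * b * (-c) * Real.cosh (b*y+a) ^ (-c-1 : ℝ)))^2
      - D^2*b^2*c/2 * Real.cosh (b*y+a) ^ (-(2*c)-2 : ℝ)) (Ioi (0:ℝ)) :=
    by
      have hP : IntegrableOn (fun y => D^2*b^2*c/2 * Real.cosh (b*y+a) ^ (-(2*c)-2 : ℝ))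
          (Ioi (0:ℝ)) := by
        have := (integrableOn_cosh_rpow b a (2*c+2) hb (by positivity)).const_mul
          (D^2*b^2*c/2)
        rw [show (-(2*c+2):ℝ) = -(2*c)-2 by ring] at this
        exact this
      exact (integrableOn_W b a c D hb hc).sub hP
  have := integral_Ioi_of_hasDerivAt_of_tendsto' (f := fun y =>
      -(D^2*b*c/2) * (Real.sinh (b*y+a) * Real.cosh (b*y+a) ^ (-(2*c)-1 : ℝ)))
    (fun y _ => G_hasDerivAt b a c D y) hInt (tendsto_G b a c D hb hc)
  rw [this]
  norm_num

theorem stmt17 (γ p ω : ℝ) (hp : 1 < p) (hω : γ ^ 2 / 4 < ω) :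
    Qfun γ p (phi γ p ω) = 0 := by
  have hp1 : (0:ℝ) < p - 1 := by linarith
  have hω0 : (0:ℝ) < ω := lt_of_le_of_lt (by positivity) hω
  have hρ0 : 0 < Real.sqrt ω := Real.sqrt_pos.2 hω0
  set ρ := Real.sqrt ω with hρdef
  have hρ2 : ρ^2 = ω := Real.sq_sqrt hω0.le
  set b := (p-1) * ρ / 2 with hbdef
  have hb : 0 < b := by positivity
  set a := _root_.artanh (γ / (2*ρ)) with hadef
  set c := 2 / (p-1) with hcdef
  have hc : 0 < c := by positivity
  set A := (p+1) * ω / 2 with hAdef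
  have hA : 0 < A := by positivity
  set D := A ^ ((1:ℝ)/(p-1)) with hDdef
  have hD : 0 < D := Real.rpow_pos_of_pos hA _
  -- the profile on each half line
  have key : ∀ ch : ℝ, 0 < ch → (A * (1/ch)^2)^((1:ℝ)/(p-1)) = D * ch^(-c:ℝ) := by
    intro ch hch
    rw [one_div, inv_pow, Real.mul_rpow hA.le (by positivity),
      Real.inv_rpow (by positivity), ← Real.rpow_natCast ch 2, ← Real.rpow_mul hch.le,
      ← Real.rpow_neg hch.le, hDdef]
    congr 2
    rw [hcdef]
    push_cast
    ring
  have hphi : ∀ x, phi γ p ω x = D * Real.cosh (b * |x| + a) ^ (-c : ℝ) := by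
    intro x
    show (A * (1 / Real.cosh (b * |x| + a)) ^ 2) ^ ((1:ℝ) / (p - 1))
        = D * Real.cosh (b * |x| + a) ^ (-c : ℝ)
    exact key _ (Real.cosh_pos _)
  -- notation for the half-line profile and its derivative
  set ψ : ℝ → ℝ := fun y => D * Real.cosh (b*y+a) ^ (-c : ℝ) with hψdef
  set ψ' : ℝ → ℝ := fun y =>
    D * (Real.sinh (b*y+a) * b * (-c) * Real.cosh (b*y+a) ^ (-c-1 : ℝ)) with hψ'def
  have hderiv_pos : ∀ x : ℝ, 0 < x → deriv (phi γ p ω) x = ψ' x := by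
    intro x hx
    have heq : phi γ p ω =ᶠ[𝓝 x] ψ := by
      filter_upwards [lt_mem_nhds hx] with y hy
      rw [hphi y, abs_of_pos hy]
    rw [heq.deriv_eq]
    exact (psi_hasDerivAt b a c D x).deriv
  have hderiv_neg : ∀ x : ℝ, x < 0 → deriv (phi γ p ω) x = ψ' (-x) * (-1) := by
    intro x hx
    have heq : phi γ p ω =ᶠ[𝓝 x] fun y => ψ (-y) := by
      filter_upwards [Iio_mem_nhds hx] with y hy
      rw [hphi y, abs_of_neg hy]
    rw [heq.deriv_eq]
    have hd : HasDerivAt (fun y : ℝ => ψ (-y))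
        (D * (Real.sinh (b*(-x)+a) * b * (-c) * Real.cosh (b*(-x)+a) ^ (-c-1 : ℝ)) * (-1)) x :=
      (psi_hasDerivAt b a c D (-x)).comp x (hasDerivAt_neg x)
    exact hd.deriv
  have h0ae : ∀ᵐ (x:ℝ), x ≠ 0 := by
    simp only [ae_iff, not_not, Set.setOf_eq_eq_singleton]
    exact measure_singleton 0
  -- gradSq
  have hgrad : gradSq (phi γ p ω) = 2 * ∫ y in Ioi (0:ℝ), (ψ' y)^2 := by
    show (∫ x : ℝ, (deriv (phi γ p ω) x)^2) = _
    have h1 : (∫ x : ℝ, (deriv (phi γ p ω) x)^2) = ∫ x : ℝ, (fun y => (ψ' y)^2) |x| := by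
      apply integral_congr_ae
      filter_upwards [h0ae] with x hx
      rcases lt_or_gt_of_ne hx with h|h
      · rw [hderiv_neg x h, abs_of_neg h]; ring
      · rw [hderiv_pos x h, abs_of_pos h]
    rw [h1]
    exact integral_comp_abs (f := fun y => ψ' y ^ 2)
  -- lpp
  have hlpp : lpp p (phi γ p ω)
      = 2 * ∫ y in Ioi (0:ℝ), D^(p+1:ℝ) * Real.cosh (b*y+a) ^ (-(2*c)-2 : ℝ) := by
    show (∫ x : ℝ, |phi γ p ω x| ^ (p+1:ℝ)) = _
    have h1 : ∀ x : ℝ, |phi γ p ω x| ^ (p+1:ℝ)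
        = (fun y => D^(p+1:ℝ) * Real.cosh (b*y+a) ^ (-(2*c)-2 : ℝ)) |x| := by
      intro x
      have hch := Real.cosh_pos (b*|x|+a)
      rw [hphi x, abs_of_pos (by positivity),
        Real.mul_rpow hD.le (Real.rpow_nonneg hch.le _), ← Real.rpow_mul hch.le]
      show D^(p+1:ℝ) * Real.cosh (b*|x|+a) ^ ((-c)*(p+1)) = _
      rw [show ((-c)*(p+1) : ℝ) = -(2*c)-2 from by rw [hcdef]; field_simp; ring]
    simp only [h1]
    exact integral_comp_abs
      (f := fun y => D^(p+1:ℝ) * Real.cosh (b*y+a) ^ (-(2*c)-2 : ℝ))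
  -- coefficient identities
  have hDp : D^(p+1:ℝ) = D^2 * A := by
    have h2 : (D:ℝ)^2 = A ^ ((2:ℝ)/(p-1)) := by
      rw [hDdef, ← Real.rpow_natCast (A ^ ((1:ℝ)/(p-1))) 2, ← Real.rpow_mul hA.le]
      congr 1
      push_cast
      ring
    rw [hDdef, ← Real.rpow_mul hA.le, h2]
    nth_rewrite 3 [← Real.rpow_one A]
    rw [← Real.rpow_add hA]
    congr 1
    field_simp
    ring
  have hkA : (p-1)/(2*(p+1)) * A = b^2*c/2 := by
    rw [hAdef, hbdef, hcdef, ← hρ2]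
    field_simp
  have hcoef : (p-1)/(2*(p+1)) * D^(p+1:ℝ) = D^2*b^2*c/2 := by
    rw [hDp]
    linear_combination D^2 * hkA
  -- integrability facts
  have intW := integrableOn_W b a c D hb hc
  have intW' : IntegrableOn (fun y => ψ' y ^ 2) (Ioi (0:ℝ)) := intW
  have intP : IntegrableOn (fun y => D^2*b^2*c/2 * Real.cosh (b*y+a) ^ (-(2*c)-2 : ℝ))
      (Ioi (0:ℝ)) := by
    have := (integrableOn_cosh_rpow b a (2*c+2) hb (by positivity)).const_mul (D^2*b^2*c/2)
    rw [show (-(2*c+2):ℝ) = -(2*c)-2 by ring] at this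
    exact this
  -- half-line integral value
  have hHL' : (∫ y in Ioi (0:ℝ), (ψ' y ^2 - D^2*b^2*c/2 * Real.cosh (b*y+a) ^ (-(2*c)-2:ℝ)))
      = D^2*b*c/2 * (Real.sinh a * Real.cosh a ^ (-(2*c)-1:ℝ)) := half_line b a c D hb hc hD
  have hcombine : (2 * ∫ y in Ioi (0:ℝ), ψ' y ^2)
      - 2 * (∫ y in Ioi (0:ℝ), D^2*b^2*c/2 * Real.cosh (b*y+a) ^ (-(2*c)-2:ℝ))
      = 2 * (D^2*b*c/2 * (Real.sinh a * Real.cosh a ^ (-(2*c)-1:ℝ))) := by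
    rw [← hHL', integral_sub intW' intP]
    ring
  -- hyperbolic tangent value at 0
  have hcha := Real.cosh_pos a
  have habs : |γ / (2*ρ)| < 1 := by
    rw [abs_div, abs_of_pos (by positivity : (0:ℝ) < 2*ρ), div_lt_one (by positivity)]
    exact abs_lt_of_sq_lt_sq (by nlinarith [hρ2]) (by positivity)
  have htanh : Real.sinh a = γ / (2*ρ) * Real.cosh a := by
    have h := tanh_artanh _ habs
    rw [← hadef, Real.tanh_eq_sinh_div_cosh] at h
    field_simp at h
    field_simp
    linear_combination h
  -- rescale the lpp term
  have hstep : (p-1)/(2*(p+1)) * (2 * ∫ y in Ioi (0:ℝ),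
        D^(p+1:ℝ) * Real.cosh (b*y+a) ^ (-(2*c)-2 : ℝ))
      = 2 * ∫ y in Ioi (0:ℝ), D^2*b^2*c/2 * Real.cosh (b*y+a) ^ (-(2*c)-2 : ℝ) := by
    rw [integral_const_mul, integral_const_mul, ← hcoef]
    ring
  -- final scalar identity
  have hbc : b * c = ρ := by rw [hbdef, hcdef]; field_simp
  have e1 : (Real.cosh a ^ (-c:ℝ))^2 = Real.cosh a ^ (-(2*c):ℝ) := by
    rw [← Real.rpow_natCast (Real.cosh a ^ (-c:ℝ)) 2, ← Real.rpow_mul hcha.le]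
    congr 1
    push_cast
    ring
  have e2 : Real.cosh a ^ (-(2*c)-1:ℝ) = Real.cosh a ^ (-(2*c):ℝ) * (Real.cosh a)⁻¹ := by
    rw [show (-(2*c)-1:ℝ) = (-(2*c)) + (-1) by ring, Real.rpow_add hcha, Real.rpow_neg_one]
  clear_value ρ b a c A D ψ ψ'
  have hfinal : 2 * (D^2*b*c/2 * (Real.sinh a * Real.cosh a ^ (-(2*c)-1:ℝ)))
      - γ/2 * (D * Real.cosh a ^ (-c:ℝ))^2 = 0 := by
    rw [mul_pow, e1, e2, htanh]
    field_simp
    ring_nf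
    linear_combination (D ^ 2 * γ * Real.cosh a ^ (-(c * 2) : ℝ)) * hbc
  -- assemble
  have hQ : Qfun γ p (phi γ p ω)
      = gradSq (phi γ p ω) - γ/2 * (phi γ p ω 0)^2
        - (p-1)/(2*(p+1)) * lpp p (phi γ p ω) := rfl
  rw [hQ, hgrad, hlpp, hphi 0, hstep]
  simp only [abs_zero, mul_zero, zero_add]
  linarith [hcombine, hfinal]
end
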